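/- arXiv:1803.01130 — 2 statements merged into one kernel-verified Lean document; each statement's English description precedes it below -/
import Mathlib

section
/- Assume (V1), (V2) and (V3). Then for every x ∈ ℝ^N with x ≠ 0: N V_∞ − (N−2)³θ/(4|x|²) ≤ N V(x) + ∇V(x)·x ≤ N V_∞ + (N−2)²θ/(2|x|²). -/
open MeasureTheory Filter Topology

noncomputable section

/-- `ℝ^N` as a Euclidean space. -/
abbrev Euc (N : ℕ) := EuclideanSpace ℝ (Fin N)

/-- `u` is admissible: continuously differentiable, `u ∈ L²` and `∇u ∈ L²`. -/
def Admissible (N : ℕ) (u : Euc N → ℝ) : Prop :=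
  ContDiff ℝ 1 u ∧ MemLp u 2 (volume : Measure (Euc N)) ∧
    MemLp (gradient u) 2 (volume : Measure (Euc N))

/-- The dilation `u_t(x) = u(x/t)`. -/
def dil (N : ℕ) (t : ℝ) (u : Euc N → ℝ) : Euc N → ℝ := fun x => u (t⁻¹ • x)

/-- `F(t) = ∫₀ᵗ f(s) ds`. -/
def Fprim (f : ℝ → ℝ) (t : ℝ) : ℝ := ∫ s in (0:ℝ)..t, f s

/-- `‖∇u‖₂²`. -/
def gradN2 (N : ℕ) (u : Euc N → ℝ) : ℝ := ∫ x : Euc N, ‖gradient u x‖ ^ 2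

/-- `‖u‖₂²`. -/
def l2N2 (N : ℕ) (u : Euc N → ℝ) : ℝ := ∫ x : Euc N, (u x) ^ 2

/-- `∇V(x)·x`, the radial derivative of `V` at `x`. -/
def dV (N : ℕ) (V : Euc N → ℝ) (x : Euc N) : ℝ := fderiv ℝ V x x

/-- The energy functional `I`. -/
def Ifun (N : ℕ) (V : Euc N → ℝ) (f : ℝ → ℝ) (u : Euc N → ℝ) : ℝ :=
  (1/2) * (∫ x : Euc N, (‖gradient u x‖ ^ 2 + V x * (u x) ^ 2)) -
    ∫ x : Euc N, Fprim f (u x)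

/-- The limit energy functional `I^∞`. -/
def IfunInf (N : ℕ) (Vinf : ℝ) (f : ℝ → ℝ) (u : Euc N → ℝ) : ℝ :=
  (1/2) * (∫ x : Euc N, (‖gradient u x‖ ^ 2 + Vinf * (u x) ^ 2)) -
    ∫ x : Euc N, Fprim f (u x)

/-- The Pohožaev functional `P`. -/
def Pfun (N : ℕ) (V : Euc N → ℝ) (f : ℝ → ℝ) (u : Euc N → ℝ) : ℝ :=
  ((N : ℝ) - 2) / 2 * gradN2 N u
    + (1/2) * (∫ x : Euc N, ((N : ℝ) * V x + dV N V x) * (u x) ^ 2)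
    - (N : ℝ) * ∫ x : Euc N, Fprim f (u x)

/-- The limit Pohožaev functional `P^∞`. -/
def PfunInf (N : ℕ) (Vinf : ℝ) (f : ℝ → ℝ) (u : Euc N → ℝ) : ℝ :=
  ((N : ℝ) - 2) / 2 * gradN2 N u + (N : ℝ) * Vinf / 2 * l2N2 N u
    - (N : ℝ) * ∫ x : Euc N, Fprim f (u x)

/-- The family of functionals `I_λ`. -/
def IfunL (N : ℕ) (V : Euc N → ℝ) (f : ℝ → ℝ) (lam : ℝ) (u : Euc N → ℝ) : ℝ :=
  (1/2) * (∫ x : Euc N, (‖gradient u x‖ ^ 2 + V x * (u x) ^ 2)) -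
    lam * ∫ x : Euc N, Fprim f (u x)

/-- The family of Pohožaev functionals `P_λ`. -/
def PfunL (N : ℕ) (V : Euc N → ℝ) (f : ℝ → ℝ) (lam : ℝ) (u : Euc N → ℝ) : ℝ :=
  ((N : ℝ) - 2) / 2 * gradN2 N u
    + (1/2) * (∫ x : Euc N, ((N : ℝ) * V x + dV N V x) * (u x) ^ 2)
    - (N : ℝ) * lam * ∫ x : Euc N, Fprim f (u x)

/-- The family of limit functionals `I_λ^∞`. -/
def IfunInfL (N : ℕ) (Vinf : ℝ) (f : ℝ → ℝ) (lam : ℝ) (u : Euc N → ℝ) : ℝ :=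
  (1/2) * (∫ x : Euc N, (‖gradient u x‖ ^ 2 + Vinf * (u x) ^ 2)) -
    lam * ∫ x : Euc N, Fprim f (u x)

/-- The family of limit Pohožaev functionals `P_λ^∞`. -/
def PfunInfL (N : ℕ) (Vinf : ℝ) (f : ℝ → ℝ) (lam : ℝ) (u : Euc N → ℝ) : ℝ :=
  ((N : ℝ) - 2) / 2 * gradN2 N u + (N : ℝ) * Vinf / 2 * l2N2 N u
    - (N : ℝ) * lam * ∫ x : Euc N, Fprim f (u x)

/-- (V1): `V` is continuous and nonnegative. -/
def V1cond (N : ℕ) (V : Euc N → ℝ) : Prop := Continuous V ∧ ∀ x, 0 ≤ V x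

/-- (V2): `V(y) → V_∞` as `|y| → ∞` and `V ≤ V_∞`. -/
def V2cond (N : ℕ) (V : Euc N → ℝ) (Vinf : ℝ) : Prop :=
  Tendsto V (cocompact (Euc N)) (𝓝 Vinf) ∧ ∀ x, V x ≤ Vinf

/-- (V3) with the parameter `θ ∈ [0,1)` made explicit. -/
def V3cond (N : ℕ) (V : Euc N → ℝ) (θ : ℝ) : Prop :=
  ContDiff ℝ 1 V ∧ 0 ≤ θ ∧ θ < 1 ∧
    ∀ x : Euc N, x ≠ 0 → ∀ t : ℝ, 0 < t →
      (1 ≤ t → 0 ≤ (N : ℝ) * (V x - V (t • x)) + (dV N V x - dV N V (t • x))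
        + ((N : ℝ) - 2) ^ 3 * θ / (4 * t ^ 2 * ‖x‖ ^ 2) * (t ^ 2 - 1)) ∧
      (t < 1 → (N : ℝ) * (V x - V (t • x)) + (dV N V x - dV N V (t • x))
        + ((N : ℝ) - 2) ^ 3 * θ / (4 * t ^ 2 * ‖x‖ ^ 2) * (t ^ 2 - 1) ≤ 0)

/-- (V4) with the parameter `θ ∈ [0,1)` made explicit. -/
def V4cond (N : ℕ) (V : Euc N → ℝ) (θ : ℝ) : Prop :=
  ContDiff ℝ 1 V ∧ 0 ≤ θ ∧ θ < 1 ∧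
    ∀ x : Euc N, x ≠ 0 → dV N V x ≤ ((N : ℝ) - 2) ^ 2 * θ / (2 * ‖x‖ ^ 2)

/-- (F1): continuity and subcritical growth `|f(t)| ≤ C₀(1 + |t|^{2^*-1})`. -/
def F1cond (N : ℕ) (f : ℝ → ℝ) : Prop :=
  Continuous f ∧ ∃ C₀ > (0:ℝ), ∀ t : ℝ,
    |f t| ≤ C₀ * (1 + |t| ^ (((N : ℝ) + 2) / ((N : ℝ) - 2)))

/-- (F2): `f(t) = o(t)` at `0` and `f(t) = o(|t|^{(N+2)/(N-2)})` at infinity. -/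
def F2cond (N : ℕ) (f : ℝ → ℝ) : Prop :=
  Tendsto (fun t => f t / t) (𝓝[≠] (0:ℝ)) (𝓝 0) ∧
    Tendsto (fun t : ℝ => f t / |t| ^ (((N : ℝ) + 2) / ((N : ℝ) - 2)))
      (cocompact ℝ) (𝓝 0)

/-- (F3): there exists `s₀` with `F(s₀) > (1/2)V_∞ s₀²`. -/
def F3cond (f : ℝ → ℝ) (Vinf : ℝ) : Prop :=
  ∃ s₀ : ℝ, (1/2) * Vinf * s₀ ^ 2 < Fprim f s₀

/-!
Put `a := N V(x) + ∇V(x)·x`, `c := (N-2)³θ/(4|x|²)` and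
`G(t) := (a + c) tᴺ - N c tᴺ⁻²/(N-2) - N tᴺ V(tx)`.
Then `G'(t) = N tᴺ⁻¹ E(t)` with `E(t)` the expression in (V3), so (V3) says that `G` decreases
on `[0, 1]` and increases on `[1, ∞)`. Hence `G(1) ≤ G(0) = 0`, which with `V ≤ V_∞` is the upper
bound, and `G(1) ≤ G(T)` for `T ≥ 1`; dividing by `Tᴺ` and letting `T → ∞`, where
`G(T)/Tᴺ → a + c - N V_∞`, gives the lower bound.
-/

open Set

lemma tendsto_smul_const_atTop_cocompact {E : Type*} [NormedAddCommGroup E] [NormedSpace ℝ E]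
    {x : E} (hx : x ≠ 0) : Tendsto (fun t : ℝ => t • x) atTop (cocompact E) := by
  refine (tendsto_norm_atTop_iff_cobounded.1 ?_).mono_right Metric.cobounded_le_cocompact
  simpa [norm_smul] using tendsto_abs_atTop_atTop.atTop_mul_const (norm_pos_iff.2 hx)

lemma isMinOn_Ici_of_hasDerivAt {f f' : ℝ → ℝ} {a b : ℝ} (hab : a ≤ b)
    (hf : ContinuousOn f (Ici a)) (hderiv : ∀ t, a < t → HasDerivAt f (f' t) t)
    (hdec : ∀ t ∈ Ioo a b, f' t ≤ 0) (hinc : ∀ t, b < t → 0 ≤ f' t) :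
    IsMinOn f (Ici a) b := by
  refine fun t (ht : a ≤ t) => show f b ≤ f t from ?_
  rcases le_total t b with htb | hbt
  · have hanti : AntitoneOn f (Icc a b) := by
      refine antitoneOn_of_hasDerivWithinAt_nonpos (f' := f') (convex_Icc a b)
        (hf.mono Icc_subset_Ici_self) (fun s hs => ?_) (fun s hs => ?_) <;> rw [interior_Icc] at hs
      exacts [(hderiv s hs.1).hasDerivWithinAt, hdec s hs]
    exact hanti ⟨ht, htb⟩ ⟨hab, le_rfl⟩ htb
  · have hmono : MonotoneOn f (Ici b) := by
      refine monotoneOn_of_hasDerivWithinAt_nonneg (f' := f') (convex_Ici b)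
        (hf.mono (Ici_subset_Ici.2 hab)) (fun s hs => ?_) (fun s hs => ?_) <;> rw [interior_Ici] at hs
      exacts [(hderiv s (hab.trans_lt hs)).hasDerivWithinAt, hinc s hs]
    exact hmono self_mem_Ici hbt hbt

lemma sub_two_pos_of_three_le {N : ℕ} (hN : 3 ≤ N) : (0 : ℝ) < N - 2 := by
  have : (3 : ℝ) ≤ N := by exact_mod_cast hN
  linarith

def pohozaevComparison (N : ℕ) (φ : ℝ → ℝ) (a c t : ℝ) : ℝ :=
  (a + c) * t ^ N - N * c / (N - 2) * t ^ (N - 2) - N * t ^ N * φ t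

section PohozaevComparison

variable {N : ℕ} {φ : ℝ → ℝ} {a c : ℝ}

lemma hasDerivAt_pohozaevComparison (hN : 3 ≤ N) {φ' t : ℝ} (hφ : HasDerivAt φ φ' t)
    (ht : t ≠ 0) :
    HasDerivAt (pohozaevComparison N φ a c)
      (N * t ^ (N - 1) * (a + c - c / t ^ 2 - (N * φ t + t * φ'))) t := by
  have hN2 := sub_two_pos_of_three_le hN
  obtain ⟨M, rfl⟩ : ∃ M, N = M + 3 := ⟨N - 3, by omega⟩
  unfold pohozaevComparison
  rw [show M + 3 - 2 = M + 1 from rfl]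
  refine ((((hasDerivAt_pow (M + 3) t).const_mul (a + c)).sub
    ((hasDerivAt_pow (M + 1) t).const_mul _)).sub
    (((hasDerivAt_pow (M + 3) t).const_mul _).mul hφ)).congr_deriv ?_
  simp only [Nat.add_sub_cancel, show M + 3 - 1 = M + 2 from rfl]
  push_cast at hN2 ⊢
  field_simp
  ring

lemma tendsto_pohozaevComparison_div_pow (hN : 3 ≤ N) {L : ℝ} (hφ : Tendsto φ atTop (𝓝 L)) :
    Tendsto (fun T => pohozaevComparison N φ a c T / T ^ N) atTop (𝓝 (a + c - N * L)) := by
  have hlim : Tendsto (fun T : ℝ => a + c - N * c / (N - 2) / T ^ 2 - N * φ T) atTop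
      (𝓝 (a + c - N * L)) := by
    simpa using (tendsto_const_nhds.sub (tendsto_const_nhds.div_atTop
      (tendsto_pow_atTop two_ne_zero))).sub (hφ.const_mul (N : ℝ))
  refine hlim.congr' ?_
  filter_upwards [eventually_gt_atTop 0] with T hT
  obtain ⟨M, rfl⟩ : ∃ M, N = M + 3 := ⟨N - 3, by omega⟩
  simp only [pohozaevComparison, show M + 3 - 2 = M + 1 by omega]
  field_simp
  ring

lemma bounds_of_isMinOn_pohozaevComparison (hN : 3 ≤ N) {L : ℝ}
    (hmin : IsMinOn (pohozaevComparison N φ a c) (Ici 0) 1) (hφ : Tendsto φ atTop (𝓝 L)) :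
    N * L - c ≤ a ∧ a ≤ N * φ 1 + 2 * c / (N - 2) := by
  have hN2 := sub_two_pos_of_three_le hN
  constructor
  · have hG1 : Tendsto (fun T => pohozaevComparison N φ a c 1 / T ^ N) atTop (𝓝 0) :=
      tendsto_const_nhds.div_atTop (tendsto_pow_atTop (by omega))
    have := le_of_tendsto_of_tendsto hG1 (tendsto_pohozaevComparison_div_pow hN hφ) <| by
      filter_upwards [eventually_gt_atTop 0] with T hT
      exact div_le_div_of_nonneg_right (hmin (mem_Ici.2 hT.le)) (by positivity)
    linarith
  · have hG : pohozaevComparison N φ a c 1 ≤ pohozaevComparison N φ a c 0 := hmin self_mem_Ici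
    simp only [pohozaevComparison, one_pow, mul_one, zero_pow (show N ≠ 0 by omega),
      zero_pow (show N - 2 ≠ 0 by omega), mul_zero, sub_zero, zero_mul] at hG
    have : N * c / (N - 2) = c + 2 * c / (N - 2) := by field_simp; ring
    linarith

end PohozaevComparison

lemma hasDerivAt_comp_smul_const {E : Type*} [NormedAddCommGroup E] [NormedSpace ℝ E]
    {V : E → ℝ} {x : E} {t : ℝ} (hV : DifferentiableAt ℝ V (t • x)) :
    HasDerivAt (fun s : ℝ => V (s • x)) (fderiv ℝ V (t • x) x) t :=
  hV.hasFDerivAt.comp_hasDerivAt t (by simpa using (hasDerivAt_id t).smul_const x)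

lemma dV_smul (N : ℕ) (V : Euc N → ℝ) (t : ℝ) (x : Euc N) :
    dV N V (t • x) = t * fderiv ℝ V (t • x) x := by
  simp [dV, map_smul]

lemma V3cond.isMinOn_pohozaevComparison {N : ℕ} (hN : 3 ≤ N) {V : Euc N → ℝ} {θ : ℝ}
    (hV3 : V3cond N V θ) {x : Euc N} (hx : x ≠ 0) :
    IsMinOn (pohozaevComparison N (fun t => V (t • x)) (N * V x + dV N V x)
      (((N : ℝ) - 2) ^ 3 * θ / (4 * ‖x‖ ^ 2))) (Ici 0) 1 := by
  obtain ⟨hV, -, -, hsign⟩ := hV3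
  have hVc := hV.continuous
  have hbracket (t : ℝ) (ht : 0 < t) :
      N * V x + dV N V x + ((N : ℝ) - 2) ^ 3 * θ / (4 * ‖x‖ ^ 2)
          - ((N : ℝ) - 2) ^ 3 * θ / (4 * ‖x‖ ^ 2) / t ^ 2
          - (N * V (t • x) + t * fderiv ℝ V (t • x) x) =
        N * (V x - V (t • x)) + (dV N V x - dV N V (t • x))
          + ((N : ℝ) - 2) ^ 3 * θ / (4 * t ^ 2 * ‖x‖ ^ 2) * (t ^ 2 - 1) := by
    have hx0 : ‖x‖ ≠ 0 := norm_ne_zero_iff.2 hx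
    rw [dV_smul]
    field_simp
    ring
  refine isMinOn_Ici_of_hasDerivAt zero_le_one
    (Continuous.continuousOn (by unfold pohozaevComparison; fun_prop))
    (fun t ht => hasDerivAt_pohozaevComparison hN
      (hasDerivAt_comp_smul_const (hV.differentiable one_ne_zero _)) ht.ne') ?_ ?_
  · rintro t ⟨ht0, ht1⟩
    rw [hbracket t ht0]
    exact mul_nonpos_of_nonneg_of_nonpos (by positivity) ((hsign x hx t ht0).2 ht1)
  · intro t ht
    have ht0 := one_pos.trans ht
    rw [hbracket t ht0]
    exact mul_nonneg (by positivity) ((hsign x hx t ht0).1 ht.le)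

theorem stmt_2_general (N : ℕ) (hN : 3 ≤ N) (V : Euc N → ℝ) (Vinf θ : ℝ)
    (hV2 : V2cond N V Vinf) (hV3 : V3cond N V θ) :
    ∀ x : Euc N, x ≠ 0 →
      (N : ℝ) * Vinf - ((N : ℝ) - 2) ^ 3 * θ / (4 * ‖x‖ ^ 2) ≤
          (N : ℝ) * V x + dV N V x ∧
        (N : ℝ) * V x + dV N V x ≤
          (N : ℝ) * Vinf + ((N : ℝ) - 2) ^ 2 * θ / (2 * ‖x‖ ^ 2) := by
  intro x hx
  obtain ⟨hlow, hup⟩ := bounds_of_isMinOn_pohozaevComparison hN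
    (hV3.isMinOn_pohozaevComparison hN hx) (hV2.1.comp (tendsto_smul_const_atTop_cocompact hx))
  have hc : 2 * (((N : ℝ) - 2) ^ 3 * θ / (4 * ‖x‖ ^ 2)) / (N - 2)
      = ((N : ℝ) - 2) ^ 2 * θ / (2 * ‖x‖ ^ 2) := by
    have := (sub_two_pos_of_three_le hN).ne'
    field_simp
    ring
  simp only [one_smul] at hup
  refine ⟨hlow, hup.trans ?_⟩
  rw [hc]
  gcongr
  exact hV2.2 x

/-- under (V1), (V2), (V3), the two-sided bound (2.9) on
`N V(x) + ∇V(x)·x` holds for every `x ≠ 0`. -/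
theorem stmt_2 (N : ℕ) (hN : 3 ≤ N) (V : Euc N → ℝ) (Vinf θ : ℝ)
    (hV1 : V1cond N V) (hV2 : V2cond N V Vinf) (hV3 : V3cond N V θ) :
    ∀ x : Euc N, x ≠ 0 →
      (N : ℝ) * Vinf - ((N : ℝ) - 2) ^ 3 * θ / (4 * ‖x‖ ^ 2) ≤
          (N : ℝ) * V x + dV N V x ∧
        (N : ℝ) * V x + dV N V x ≤
          (N : ℝ) * Vinf + ((N : ℝ) - 2) ^ 2 * θ / (2 * ‖x‖ ^ 2) :=
  stmt_2_general N hN V Vinf θ hV2 hV3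
end
end

section
/- Let V_∞ ≥ 0 and assume (F1), (F2), (F3). Let u be admissible with F∘u integrable and ∫_{ℝ^N}[(1/2)V_∞ u² − F(u)] dx < 0. Then there exists a unique t_u > 0 such that P^∞(u_{t_u}) = 0; moreover the function t ↦ I^∞(u_t) attains its maximum over (0,∞) at t = t_u. -/
open MeasureTheory Filter Topology

noncomputable section

/-!
Changing variables in the dilation `u_t(x) = u(x/t)` gives `‖∇u_t‖₂² = t^(N-2) ‖∇u‖₂²`, while
the zeroth-order integrals scale by `t^N`. Hence `I^∞(u_t) = α t^(N-2) - β t^N` and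
`P^∞(u_t) = (N-2) α t^(N-2) - N β t^N = t (d/dt) I^∞(u_t)`, with `α = ‖∇u‖₂² / 2 > 0` (the only
`L²` function with vanishing gradient is `0`) and `β = ∫ F(u) - V_∞ u² / 2 > 0` by hypothesis.
Such a profile has exactly one positive critical point `t_u`, and weighted AM-GM shows that it is
the maximum on `(0, ∞)`.
-/

section Profile

variable {m n : ℕ} {a b α β τ t : ℝ}

lemma natCast_mul_pow_le_add {x : ℝ} (hmn : m ≤ n) (hx : 0 ≤ x) :
    (n : ℝ) * x ^ m ≤ m * x ^ n + (n - m) := by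
  rcases Nat.eq_zero_or_pos n with rfl | hn
  · simp [Nat.le_zero.1 hmn]
  have hn' : (0 : ℝ) < n := by exact_mod_cast hn
  have hmn' : (m : ℝ) ≤ n := by exact_mod_cast hmn
  -- weighted AM-GM for `x ^ n` and `1` with weights `m / n` and `(n - m) / n`
  have h := Real.geom_mean_le_arith_mean2_weighted (by positivity)
    (div_nonneg (sub_nonneg.2 hmn') hn'.le) (pow_nonneg hx n) zero_le_one
    (show (m : ℝ) / n + (n - m) / n = 1 by field_simp; ring)
  rw [← Real.rpow_natCast x n, ← Real.rpow_mul hx, mul_div_cancel₀ _ hn'.ne', Real.one_rpow,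
    mul_one, mul_one] at h
  simp only [Real.rpow_natCast] at h
  calc (n : ℝ) * x ^ m ≤ n * (m / n * x ^ n + (n - m) / n) := by gcongr
    _ = m * x ^ n + (n - m) := by field_simp

lemma exists_pos_mul_pow_eq (hmn : m < n) (ha : 0 < a) (hb : 0 < b) :
    ∃ τ, 0 < τ ∧ a * τ ^ m = b * τ ^ n := by
  refine ⟨(a / b) ^ ((n - m : ℕ) : ℝ)⁻¹, by positivity, ?_⟩
  rw [← pow_sub_mul_pow _ hmn.le, Real.rpow_inv_natCast_pow (div_pos ha hb).le (by omega)]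
  field_simp

lemma eq_of_mul_pow_eq (hmn : m < n) (hb : b ≠ 0) (ht : 0 < t) (hτ : 0 < τ)
    (h₁ : a * t ^ m = b * t ^ n) (h₂ : a * τ ^ m = b * τ ^ n) : t = τ := by
  rw [← pow_sub_mul_pow _ hmn.le] at h₁ h₂
  have ht' : t ^ (n - m) = a / b := by
    field_simp
    exact mul_right_cancel₀ (pow_ne_zero m ht.ne') (by linear_combination -h₁)
  have hτ' : τ ^ (n - m) = a / b := by
    field_simp
    exact mul_right_cancel₀ (pow_ne_zero m hτ.ne') (by linear_combination -h₂)
  exact (pow_left_inj₀ ht.le hτ.le (by omega)).1 (ht'.trans hτ'.symm)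

lemma sub_mul_pow_le_of_mul_pow_eq (hn : 0 < n) (hmn : m ≤ n) (hα : 0 ≤ α) (hτ : 0 < τ)
    (ht : 0 ≤ t) (h : m * α * τ ^ m = n * β * τ ^ n) :
    α * t ^ m - β * t ^ n ≤ α * τ ^ m - β * τ ^ n := by
  obtain ⟨x, hx, rfl⟩ : ∃ x, 0 ≤ x ∧ t = x * τ := ⟨t / τ, by positivity, by field_simp⟩
  have key := mul_le_mul_of_nonneg_left (natCast_mul_pow_le_add hmn hx)
    (mul_nonneg hα (pow_nonneg hτ.le m))
  refine le_of_mul_le_mul_left ?_ (Nat.cast_pos.2 hn : (0 : ℝ) < n)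
  rw [mul_pow, mul_pow]
  linear_combination key + (x ^ n - 1) * h

end Profile

section Gradient

variable {E : Type*} [NormedAddCommGroup E] [InnerProductSpace ℝ E] [CompleteSpace E]

lemma ContDiff.continuous_gradient {u : E → ℝ} (hu : ContDiff ℝ 1 u) : Continuous (gradient u) :=
  (InnerProductSpace.toDual ℝ E).symm.continuous.comp (hu.continuous_fderiv one_ne_zero)

lemma gradient_comp_smul {u : E → ℝ} {c : ℝ} {x : E} (hu : DifferentiableAt ℝ u (c • x)) :
    gradient (fun y => u (c • y)) x = c • gradient u (c • x) := by
  have hcomp := hu.hasFDerivAt.comp x ((hasFDerivAt_id x).const_smul c)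
  rw [show (fderiv ℝ u (c • x)).comp (c • ContinuousLinearMap.id ℝ E) = c • fderiv ℝ u (c • x)
    by ext; simp] at hcomp
  rw [gradient, show fderiv ℝ (fun y => u (c • y)) x = c • fderiv ℝ u (c • x) from hcomp.fderiv,
    gradient, map_smulₛₗ]
  simp

lemma eq_zero_of_gradient_eq_zero_of_memLp [FiniteDimensional ℝ E] [Nontrivial E]
    [MeasurableSpace E] [BorelSpace E] (μ : Measure E) [μ.IsAddHaarMeasure] {u : E → ℝ}
    {p : ENNReal} (hp₀ : p ≠ 0) (hp : p ≠ ⊤) (hd : Differentiable ℝ u)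
    (hg : ∀ x, gradient u x = 0) (hu : MemLp u p μ) : u = 0 := by
  have hconst : u = fun _ => u 0 := funext fun x =>
    is_const_of_fderiv_eq_zero hd (fun y => by rw [← toDual_gradient, hg, map_zero]) x 0
  rw [hconst, memLp_const_iff hp₀ hp, measure_univ_of_isAddLeftInvariant] at hu
  rw [hconst, hu.resolve_right (lt_irrefl _)]
  rfl

end Gradient

section Dilation

variable {N : ℕ} {u : Euc N → ℝ} {t : ℝ}

lemma integral_comp_inv_smul_euc (ht : 0 ≤ t) (φ : Euc N → ℝ) :
    ∫ x : Euc N, φ (t⁻¹ • x) = t ^ N * ∫ x, φ x := by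
  rw [Measure.integral_comp_inv_smul_of_nonneg volume φ ht, finrank_euclideanSpace_fin,
    smul_eq_mul]

lemma norm_gradient_dil_sq (hu : Differentiable ℝ u) (t : ℝ) (x : Euc N) :
    ‖gradient (dil N t u) x‖ ^ 2 = t⁻¹ ^ 2 * ‖gradient u (t⁻¹ • x)‖ ^ 2 := by
  unfold dil
  rw [gradient_comp_smul (hu _), norm_smul, mul_pow, Real.norm_eq_abs, sq_abs]

lemma gradN2_dil (hN : 2 ≤ N) (hu : Differentiable ℝ u) (ht : 0 < t) :
    gradN2 N (dil N t u) = t ^ (N - 2) * gradN2 N u := by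
  simp only [gradN2, norm_gradient_dil_sq hu]
  rw [integral_comp_inv_smul_euc ht.le (fun y => t⁻¹ ^ 2 * ‖gradient u y‖ ^ 2),
    integral_const_mul, ← pow_sub_mul_pow t hN]
  field_simp

lemma PfunInf_dil (hN : 2 ≤ N) (Vinf : ℝ) (f : ℝ → ℝ) (hu : Differentiable ℝ u) (ht : 0 < t) :
    PfunInf N Vinf f (dil N t u) = ((N - 2 : ℕ) : ℝ) * (gradN2 N u / 2) * t ^ (N - 2)
      - N * ((∫ x, Fprim f (u x)) - Vinf / 2 * l2N2 N u) * t ^ N := by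
  rw [PfunInf, gradN2_dil hN hu ht, l2N2, l2N2]
  unfold dil
  rw [integral_comp_inv_smul_euc ht.le (fun y => u y ^ 2),
    integral_comp_inv_smul_euc ht.le (fun y => Fprim f (u y)), Nat.cast_sub hN]
  push_cast
  ring

lemma IfunInf_dil (hN : 2 ≤ N) (Vinf : ℝ) (f : ℝ → ℝ) (hu : Admissible N u) (ht : 0 < t) :
    IfunInf N Vinf f (dil N t u) = gradN2 N u / 2 * t ^ (N - 2)
      - ((∫ x, Fprim f (u x)) - Vinf / 2 * l2N2 N u) * t ^ N := by
  obtain ⟨huC, huL2, hgL2⟩ := hu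
  have hud := huC.differentiable one_ne_zero
  have hgrad : Integrable (fun x => ‖gradient (dil N t u) x‖ ^ 2) := by
    simp only [norm_gradient_dil_sq hud]
    exact (((memLp_two_iff_integrable_sq_norm hgL2.aestronglyMeasurable).1 hgL2).comp_smul
      (inv_ne_zero ht.ne')).const_mul _
  have hsq : Integrable (fun x => Vinf * dil N t u x ^ 2) :=
    (((memLp_two_iff_integrable_sq huL2.aestronglyMeasurable).1 huL2).comp_smul
      (inv_ne_zero ht.ne')).const_mul Vinf
  rw [IfunInf, integral_add hgrad hsq, ← gradN2, gradN2_dil hN hud ht, integral_const_mul, l2N2]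
  unfold dil
  rw [integral_comp_inv_smul_euc ht.le (fun y => u y ^ 2),
    integral_comp_inv_smul_euc ht.le (fun y => Fprim f (u y))]
  ring

lemma gradN2_pos (hN : 0 < N) (hu : Admissible N u) (hu₀ : u ≠ 0) : 0 < gradN2 N u := by
  obtain ⟨huC, huL2, hgL2⟩ := hu
  have : NeZero N := ⟨hN.ne'⟩
  refine (integral_nonneg fun x => by positivity).lt_of_ne' fun h => hu₀ ?_
  have hae := (integral_eq_zero_iff_of_nonneg (fun x => by positivity)
    ((memLp_two_iff_integrable_sq_norm hgL2.aestronglyMeasurable).1 hgL2)).1 h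
  have hzero := (Continuous.ae_eq_iff_eq volume (huC.continuous_gradient.norm.pow 2)
    continuous_const).1 hae
  refine eq_zero_of_gradient_eq_zero_of_memLp volume two_ne_zero ENNReal.ofNat_ne_top
    (huC.differentiable one_ne_zero) (fun x => ?_) huL2
  exact norm_eq_zero.1 ((pow_eq_zero_iff two_ne_zero).1 (congrFun hzero x))

end Dilation

theorem stmt_11_general (N : ℕ) (hN : 3 ≤ N) (Vinf : ℝ) (f : ℝ → ℝ) (u : Euc N → ℝ)
    (hu : Admissible N u) (hF : Integrable (fun x : Euc N => Fprim f (u x)))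
    (hΛ : (∫ x : Euc N, ((1/2) * Vinf * (u x) ^ 2 - Fprim f (u x))) < 0) :
    ∃ tu : ℝ, 0 < tu ∧ PfunInf N Vinf f (dil N tu u) = 0 ∧
      (∀ t : ℝ, 0 < t → PfunInf N Vinf f (dil N t u) = 0 → t = tu) ∧
      ∀ t : ℝ, 0 < t → IfunInf N Vinf f (dil N t u) ≤ IfunInf N Vinf f (dil N tu u) := by
  have hud := hu.1.differentiable one_ne_zero
  have hα : 0 < gradN2 N u / 2 := by
    have hu₀ : u ≠ 0 := by rintro rfl; simp [Fprim] at hΛ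
    exact half_pos (gradN2_pos (by omega) hu hu₀)
  have hβ : 0 < (∫ x, Fprim f (u x)) - Vinf / 2 * l2N2 N u := by
    rw [integral_sub (hu.2.1.integrable_sq.const_mul _) hF, integral_const_mul] at hΛ
    rw [l2N2]
    linarith
  have hN2 : N - 2 < N := by omega
  have hm : (0 : ℝ) < (N - 2 : ℕ) := by exact_mod_cast (by omega : 0 < N - 2)
  have hn : (0 : ℝ) < N := by exact_mod_cast (by omega : 0 < N)
  obtain ⟨τ, hτ, hbal⟩ := exists_pos_mul_pow_eq hN2 (mul_pos hm hα) (mul_pos hn hβ)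
  refine ⟨τ, hτ, ?_, fun t ht hP => ?_, fun t ht => ?_⟩
  · rw [PfunInf_dil (by omega) Vinf f hud hτ, hbal, sub_self]
  · rw [PfunInf_dil (by omega) Vinf f hud ht, sub_eq_zero] at hP
    exact eq_of_mul_pow_eq hN2 (mul_pos hn hβ).ne' ht hτ hP hbal
  · rw [IfunInf_dil (by omega) Vinf f hu ht, IfunInf_dil (by omega) Vinf f hu hτ]
    exact sub_mul_pow_le_of_mul_pow_eq (by omega) hN2.le hα.le hτ ht.le hbal

/-- autonomous version of Lemma 2.7: for `u ∈ Λ` there is a unique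
`t_u > 0` with `P^∞(u_{t_u}) = 0`, which maximizes `t ↦ I^∞(u_t)` on `(0,∞)`. -/
theorem stmt_11 (N : ℕ) (hN : 3 ≤ N) (Vinf : ℝ) (hVinf : 0 ≤ Vinf)
    (f : ℝ → ℝ) (hF1 : F1cond N f) (hF2 : F2cond N f) (hF3 : F3cond f Vinf)
    (u : Euc N → ℝ) (hu : Admissible N u)
    (hF : Integrable (fun x : Euc N => Fprim f (u x)))
    (hΛ : (∫ x : Euc N, ((1/2) * Vinf * (u x) ^ 2 - Fprim f (u x))) < 0) :
    ∃ tu : ℝ, 0 < tu ∧ PfunInf N Vinf f (dil N tu u) = 0 ∧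
      (∀ t : ℝ, 0 < t → PfunInf N Vinf f (dil N t u) = 0 → t = tu) ∧
      ∀ t : ℝ, 0 < t → IfunInf N Vinf f (dil N t u) ≤ IfunInf N Vinf f (dil N tu u) :=
  stmt_11_general N hN Vinf f u hu hF hΛ
end
end
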